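/- arXiv:0906.5263 — 2 statements merged into one kernel-verified Lean document; each statement's English description precedes it below -/
import Mathlib

section
/- Suppose the data mining algorithm outputs exactly m patterns for every dataset, and datasets are drawn from a discrete null distribution Π_0. Define the limiting sample-based p-value of pattern x in dataset D' as p(x) = Σ_{D̂} Pr(D̂) · |{y ∈ A(D̂) : f(x,D') ≤ f(y,D̂)}| / m. Then for D' ~ Π_0 and any α ∈ [0,1], Pr(m · min_{x ∈ A(D')} p(x) ≤ α) ≤ α (the minP-property holds). -/
/-!
Let `T(D) = max_{y ∈ A(D)} f(y, D)`. If `m · p(x) ≤ α` for some `x ∈ A(D')`, then the null mass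
of `{D̂ : T(D') ≤ T(D̂)}` is at most `α`: whenever `f(x, D') ≤ T(D̂)` (in particular whenever
`T(D') ≤ T(D̂)`), at least one `y ∈ A(D̂)` is counted in `m · p(x)`. A discrete probability
integral transform for `T` then bounds the mass of all such `D'` by `α`: the `D'` in that set
with the smallest `T` has every other member in its upper tail.
-/

open Finset

theorem sum_le_of_forall_upper_tail_le {ι : Type*} [Fintype ι] {w : ι → ℝ} (hw : ∀ i, 0 ≤ w i)
    (g : ι → ℝ) {s : Finset ι} {α : ℝ} (hα : 0 ≤ α)
    (htail : ∀ i ∈ s, ∑ j with g i ≤ g j, w j ≤ α) :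
    ∑ i ∈ s, w i ≤ α := by
  rcases s.eq_empty_or_nonempty with rfl | hs
  · simpa using hα
  obtain ⟨i₀, hi₀, hmin⟩ := s.exists_min_image g hs
  calc ∑ i ∈ s, w i
      ≤ ∑ j with g i₀ ≤ g j, w j :=
        sum_le_sum_of_subset_of_nonneg (fun j hj => mem_filter.mpr ⟨mem_univ j, hmin j hj⟩)
          fun j _ _ => hw j
    _ ≤ α := htail i₀ hi₀

theorem sum_filter_le_sup'_le_sum_mul_card_filter {D χ : Type*} [Fintype D] {w : D → ℝ}
    (hw : ∀ d, 0 ≤ w d) (A : D → Finset χ) (hA : ∀ d, (A d).Nonempty) (f : χ → D → ℝ) (t : ℝ) :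
    ∑ d with t ≤ (A d).sup' (hA d) (f · d), w d
      ≤ ∑ d, w d * ((A d).filter fun y => t ≤ f y d).card := by
  rw [sum_filter]
  refine sum_le_sum fun d _ => ?_
  split_ifs with ht
  · obtain ⟨y, hy, hty⟩ := (le_sup'_iff (hA d)).mp ht
    have hcount : (1 : ℝ) ≤ ((A d).filter fun y => t ≤ f y d).card := by
      exact_mod_cast card_pos.mpr ⟨y, mem_filter.mpr ⟨hy, hty⟩⟩
    nlinarith [hw d]
  · exact mul_nonneg (hw d) (Nat.cast_nonneg _)

/-- minP-property for constant output size: if the algorithm outputs exactly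
`m` patterns on every dataset, datasets are drawn from a discrete null
distribution `w`, and the limiting sample-based p-value of pattern `x` in
dataset `D'` is `p(x) = ∑_{D̂} w(D̂)·|{y ∈ A(D̂) : f(x,D') ≤ f(y,D̂)}| / m`,
then `Pr_{D' ~ w}(m · min_{x ∈ A(D')} p(x) ≤ α) ≤ α` for all `α ∈ [0,1]`. -/
theorem stmt_8 (D χ : Type*) [Fintype D]
    (w : D → ℝ) (hw : ∀ d, 0 ≤ w d)
    (A : D → Finset χ) (m : ℕ) (hm : 0 < m) (hcard : ∀ d, (A d).card = m)
    (f : χ → D → ℝ) (α : ℝ) (hα : α ∈ Set.Icc (0 : ℝ) 1) :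
    ∑ d', w d' *
        (if (m : ℝ) *
            ((A d').inf' (Finset.card_pos.mp (by rw [hcard d']; exact hm))
              fun x => ∑ d, w d * (((A d).filter fun y => f x d' ≤ f y d).card : ℝ) / m)
            ≤ α then 1 else 0)
      ≤ α := by
  have hA : ∀ d, (A d).Nonempty := fun d => card_pos.mp (by rw [hcard d]; exact hm)
  simp only [mul_ite, mul_one, mul_zero, ← sum_filter]
  refine sum_le_of_forall_upper_tail_le hw (fun d => (A d).sup' (hA d) (f · d)) hα.1
    fun d' hd' => ?_
  obtain ⟨x, hx, hpx⟩ := exists_mem_eq_inf' (hA d')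
    fun x => ∑ d, w d * (((A d).filter fun y => f x d' ≤ f y d).card : ℝ) / m
  have hreject := (mem_filter.mp hd').2
  rw [hpx, mul_sum] at hreject
  simp only [mul_div_cancel₀ _ (Nat.cast_ne_zero.mpr hm.ne' : (m : ℝ) ≠ 0)] at hreject
  calc ∑ d with (A d').sup' (hA d') (f · d') ≤ (A d).sup' (hA d) (f · d), w d
      ≤ ∑ d with f x d' ≤ (A d).sup' (hA d) (f · d), w d :=
        sum_le_sum_of_subset_of_nonneg
          (monotone_filter_right _ fun d _ h => (le_sup' (f · d') hx).trans h) fun d _ _ => hw d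
    _ ≤ ∑ d, w d * ((A d).filter fun y => f x d' ≤ f y d).card :=
        sum_filter_le_sup'_le_sum_mul_card_filter hw A hA f _
    _ ≤ α := hreject
end

section
/- Adversarial example violating the minP-property: suppose with probability 4/5 the algorithm outputs one pattern whose p-value is uniform on [1/10, 1], and with probability 1/5 it outputs two patterns, one with p-value uniform on [0, 1/10] and one uniform on [1/10, 1]. Let p' be the minimum output p-value and m₀ the number of output patterns. Then Pr(m₀·p' ≤ 3/5) = 29/45 > 3/5, so the minP-property fails at t = 3/5. -/
open MeasureTheory

/-! When two patterns are output, `2 p' ≤ 1/5 ≤ 3/5` always holds, so the event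
`m₀ p' ≤ 3/5` is the disjoint union of `{m₀ = 1, p' ≤ 3/5}`, of probability
`(4/5)(5/9) = 4/9`, and `{m₀ = 2}`, of probability `1/5`; and `4/9 + 1/5 = 29/45`. -/

section TwoPatterns

variable {Ω : Type*} {m₀ : Ω → ℕ} {p' : Ω → ℝ} {b t : ℝ}

lemma setOf_count_mul_le_eq_union (hcases : ∀ ω, m₀ ω = 1 ∨ m₀ ω = 2)
    (hbound : ∀ ω, m₀ ω = 2 → p' ω ≤ b) (hbt : 2 * b ≤ t) :
    {ω | (m₀ ω : ℝ) * p' ω ≤ t} = {ω | m₀ ω = 1 ∧ p' ω ≤ t} ∪ {ω | m₀ ω = 2} := by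
  ext ω
  rcases hcases ω with h | h
  · simp [h]
  · have := hbound ω h
    simp only [Set.mem_ofPred_eq, Set.mem_union, h, OfNat.ofNat_ne_one, false_and, false_or,
      iff_true]
    push_cast
    linarith

lemma measure_count_mul_le [MeasurableSpace Ω] (P : Measure Ω) (hm₀ : Measurable m₀)
    (hcases : ∀ ω, m₀ ω = 1 ∨ m₀ ω = 2)
    (hbound : ∀ ω, m₀ ω = 2 → p' ω ≤ b) (hbt : 2 * b ≤ t) :
    P {ω | (m₀ ω : ℝ) * p' ω ≤ t} = P {ω | m₀ ω = 1 ∧ p' ω ≤ t} + P {ω | m₀ ω = 2} := by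
  have hdisj : Disjoint {ω | m₀ ω = 1 ∧ p' ω ≤ t} {ω | m₀ ω = 2} :=
    Set.disjoint_left.2 fun ω h₁ h₂ => by simp_all
  rw [setOf_count_mul_le_eq_union hcases hbound hbt,
    measure_union hdisj (hm₀ (measurableSet_singleton 2))]

end TwoPatterns

theorem stmt_10_general {Ω : Type*} [MeasurableSpace Ω] (P : Measure Ω)
    (m₀ : Ω → ℕ) (p' : Ω → ℝ) (hm₀ : Measurable m₀)
    (hcases : ∀ ω, m₀ ω = 1 ∨ m₀ ω = 2)
    (h1 : ∀ c ∈ Set.Icc (1/10 : ℝ) 1,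
      P {ω | m₀ ω = 1 ∧ p' ω ≤ c} = ENNReal.ofReal ((4/5) * ((c - 1/10) / (9/10))))
    (h2 : P {ω | m₀ ω = 2} = ENNReal.ofReal (1/5))
    (h2p : ∀ ω, m₀ ω = 2 → 0 ≤ p' ω ∧ p' ω ≤ 1/10) :
    P {ω | (m₀ ω : ℝ) * p' ω ≤ 3/5} = ENNReal.ofReal (29/45) ∧
    (3/5 : ℝ) < 29/45 := by
  refine ⟨?_, by norm_num⟩
  rw [measure_count_mul_le P hm₀ hcases (fun ω h => (h2p ω h).2) (by norm_num),
    h1 (3/5) (by norm_num), h2, ← ENNReal.ofReal_add (by norm_num) (by norm_num)]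
  norm_num

/-- Adversarial example violating the minP-property: with probability `4/5`
the algorithm outputs one pattern with p-value uniform on `[1/10, 1]`, and
with probability `1/5` two patterns, the smaller p-value uniform on
`[0, 1/10]`.  Then `Pr(m₀·p' ≤ 3/5) = 29/45 > 3/5`, violating the
minP-property at `t = 3/5`. -/
theorem stmt_10 {Ω : Type*} [MeasurableSpace Ω] (P : Measure Ω) [IsProbabilityMeasure P]
    (m₀ : Ω → ℕ) (p' : Ω → ℝ) (hm₀ : Measurable m₀) (hp' : Measurable p')
    (hcases : ∀ ω, m₀ ω = 1 ∨ m₀ ω = 2)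
    (h1 : ∀ c ∈ Set.Icc (1/10 : ℝ) 1,
      P {ω | m₀ ω = 1 ∧ p' ω ≤ c} = ENNReal.ofReal ((4/5) * ((c - 1/10) / (9/10))))
    (h2 : P {ω | m₀ ω = 2} = ENNReal.ofReal (1/5))
    (h2p : ∀ ω, m₀ ω = 2 → 0 ≤ p' ω ∧ p' ω ≤ 1/10) :
    P {ω | (m₀ ω : ℝ) * p' ω ≤ 3/5} = ENNReal.ofReal (29/45) ∧
    (3/5 : ℝ) < 29/45 :=
  stmt_10_general P m₀ p' hm₀ hcases h1 h2 h2p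
end
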